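/- Let ψ, χ : [0,1] × ℝ → ℝ be smooth with ψ > 0 and q := √(ψ_r² + χ_r²) > 0, and let f = f(t, ξ, p) be a C¹ function. Let u = u(r, t) be a C³ function satisfying u_t = (1/(ψq)) ∂_r((ψ/q) u_r) + f(t, u, u_r) on (0,1) × ℝ. Then v := u_r / q satisfies on (0,1) × ℝ the identity v_t = (1/(ψq)) ∂_r((ψ/q) v_r) + v · [ (1/q) ∂_r(ψ_r/(qψ)) − q_t/q + f_p(t,u,u_r) q_r/q ] + f_ξ(t,u,u_r) v + f_p(t,u,u_r) v_r. -/

import Mathlib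

open Real

/-- Partial derivative in the first (radial) variable. -/
noncomputable def pdr (g : ℝ → ℝ → ℝ) (r t : ℝ) : ℝ := deriv (fun s => g s t) r

/-- Partial derivative in the second (time) variable. -/
noncomputable def pdt (g : ℝ → ℝ → ℝ) (r t : ℝ) : ℝ := deriv (fun s => g r s) t

/-- The metric coefficient `q = √(ψ_r² + χ_r²)`. -/
noncomputable def qfun (ψ χ : ℝ → ℝ → ℝ) (r t : ℝ) : ℝ :=
  Real.sqrt ((pdr ψ r t) ^ 2 + (pdr χ r t) ^ 2)

noncomputable def D1 (G : ℝ × ℝ → ℝ) (p : ℝ × ℝ) : ℝ := fderiv ℝ G p (1, 0)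
noncomputable def D2 (G : ℝ × ℝ → ℝ) (p : ℝ × ℝ) : ℝ := fderiv ℝ G p (0, 1)

lemma hasDerivAt_D1 {G : ℝ × ℝ → ℝ} {p : ℝ × ℝ} (h : DifferentiableAt ℝ G p) :
    HasDerivAt (fun s => G (s, p.2)) (D1 G p) p.1 := by
  have h1 : HasDerivAt (fun s : ℝ => (s, p.2)) ((1:ℝ), (0:ℝ)) p.1 :=
    (hasDerivAt_id p.1).prodMk (hasDerivAt_const _ _)
  exact h.hasFDerivAt.comp_hasDerivAt p.1 h1

lemma hasDerivAt_D2 {G : ℝ × ℝ → ℝ} {p : ℝ × ℝ} (h : DifferentiableAt ℝ G p) :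
    HasDerivAt (fun τ => G (p.1, τ)) (D2 G p) p.2 := by
  have h1 : HasDerivAt (fun τ : ℝ => (p.1, τ)) ((0:ℝ), (1:ℝ)) p.2 :=
    (hasDerivAt_const _ _).prodMk (hasDerivAt_id p.2)
  exact h.hasFDerivAt.comp_hasDerivAt p.2 h1

lemma D1_contDiffAt {G : ℝ×ℝ → ℝ} {p} {n m : WithTop ℕ∞} (h : ContDiffAt ℝ n G p) (hm : m + 1 ≤ n) :
    ContDiffAt ℝ m (D1 G) p := (h.fderiv_right hm).clm_apply contDiffAt_const

lemma D2_contDiffAt {G : ℝ×ℝ → ℝ} {p} {n m : WithTop ℕ∞} (h : ContDiffAt ℝ n G p) (hm : m + 1 ≤ n) :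
    ContDiffAt ℝ m (D2 G) p := (h.fderiv_right hm).clm_apply contDiffAt_const

lemma D1_contDiff {G : ℝ×ℝ → ℝ} {n m : WithTop ℕ∞} (h : ContDiff ℝ n G) (hm : m + 1 ≤ n) :
    ContDiff ℝ m (D1 G) := (h.fderiv_right hm).clm_apply contDiff_const

lemma D2_contDiff {G : ℝ×ℝ → ℝ} {n m : WithTop ℕ∞} (h : ContDiff ℝ n G) (hm : m + 1 ≤ n) :
    ContDiff ℝ m (D2 G) := (h.fderiv_right hm).clm_apply contDiff_const

lemma D1D2_symm {G : ℝ×ℝ → ℝ} (h : ContDiff ℝ 3 G) (p : ℝ×ℝ) :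
    D1 (D2 G) p = D2 (D1 G) p := by
  have hd : Differentiable ℝ G := h.differentiable (by norm_num)
  have hfd : ContDiff ℝ 2 (fderiv ℝ G) := h.fderiv_right (by norm_num)
  have hfd1 : DifferentiableAt ℝ (fderiv ℝ G) p := hfd.differentiable (by norm_num) p
  have hsymm := second_derivative_symmetric (f := G) (f' := fderiv ℝ G)
      (fun y => (hd y).hasFDerivAt) hfd1.hasFDerivAt
  have key : ∀ v w : ℝ×ℝ, fderiv ℝ (fun q => fderiv ℝ G q v) p w
      = fderiv ℝ (fderiv ℝ G) p w v := by
    intro v w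
    have h2 : HasFDerivAt (fun q => (fderiv ℝ G q) v)
        (((ContinuousLinearMap.apply ℝ ℝ v)).comp (fderiv ℝ (fderiv ℝ G) p)) p :=
      (ContinuousLinearMap.apply ℝ ℝ v).hasFDerivAt.comp p hfd1.hasFDerivAt
    rw [h2.fderiv]; rfl
  have e1 : D2 G = fun q => fderiv ℝ G q (0,1) := rfl
  have e2 : D1 G = fun q => fderiv ℝ G q (1,0) := rfl
  simp only [D1, D2, e1, e2]
  rw [key, key, hsymm]

lemma f_chain {F3 : ℝ×ℝ×ℝ → ℝ} (hf : ContDiff ℝ 1 F3) {t : ℝ} {a b : ℝ → ℝ} {r a' b' : ℝ}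
    (ha : HasDerivAt a a' r) (hb : HasDerivAt b b' r) :
    HasDerivAt (fun s => F3 (t, a s, b s))
      (a' * fderiv ℝ F3 (t, a r, b r) (0,1,0) + b' * fderiv ℝ F3 (t, a r, b r) (0,0,1)) r := by
  have hin : HasDerivAt (fun s => ((t, a s, b s) : ℝ×ℝ×ℝ)) ((0:ℝ), a', b') r :=
    (hasDerivAt_const _ _).prodMk (ha.prodMk hb)
  have hF := (hf.differentiable (by simp) (t, a r, b r)).hasFDerivAt
  have h := hF.comp_hasDerivAt r hin
  convert h using 1
  case e'_4 => rfl
  case e'_5 => rfl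
  case e'_8 => rfl
  have : ((0:ℝ), a', b') = a' • ((0:ℝ),(1:ℝ),(0:ℝ)) + b' • ((0:ℝ),(0:ℝ),(1:ℝ)) := by
    simp [Prod.ext_iff]
  rw [this, map_add, map_smul, map_smul]
  simp [smul_eq_mul]

lemma f_partial2 {F3 : ℝ×ℝ×ℝ → ℝ} (hf : ContDiff ℝ 1 F3) (t a b : ℝ) :
    deriv (fun ξ => F3 (t, ξ, b)) a = fderiv ℝ F3 (t, a, b) (0,1,0) := by
  have hin : HasDerivAt (fun ξ : ℝ => ((t, ξ, b) : ℝ×ℝ×ℝ)) ((0:ℝ), 1, 0) a :=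
    (hasDerivAt_const _ _).prodMk ((hasDerivAt_id a).prodMk (hasDerivAt_const _ _))
  exact ((hf.differentiable (by simp) (t,a,b)).hasFDerivAt.comp_hasDerivAt a hin).deriv

lemma f_partial3 {F3 : ℝ×ℝ×ℝ → ℝ} (hf : ContDiff ℝ 1 F3) (t a b : ℝ) :
    deriv (fun p => F3 (t, a, p)) b = fderiv ℝ F3 (t, a, b) (0,0,1) := by
  have hin : HasDerivAt (fun p : ℝ => ((t, a, p) : ℝ×ℝ×ℝ)) ((0:ℝ), 0, 1) b :=
    (hasDerivAt_const _ _).prodMk ((hasDerivAt_const _ _).prodMk (hasDerivAt_id b))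
  exact ((hf.differentiable (by simp) (t,a,b)).hasFDerivAt.comp_hasDerivAt b hin).deriv

lemma pdr_eq' {G : ℝ×ℝ → ℝ} {r t : ℝ} (h : DifferentiableAt ℝ G (r,t)) :
    deriv (fun s => G (s,t)) r = D1 G (r,t) := (hasDerivAt_D1 h).deriv

lemma pdt_eq' {G : ℝ×ℝ → ℝ} {r t : ℝ} (h : DifferentiableAt ℝ G (r,t)) :
    deriv (fun τ => G (r,τ)) t = D2 G (r,t) := (hasDerivAt_D2 h).deriv

-- helper inequalities in WithTop ℕ∞
lemma wt_infty1 : ((⊤:ℕ∞) : WithTop ℕ∞) + 1 ≤ ((⊤:ℕ∞) : WithTop ℕ∞) := by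
  rw [show (((⊤:ℕ∞) : WithTop ℕ∞) + 1) = ((⊤:ℕ∞) : WithTop ℕ∞) from rfl]
lemma wt_one_le_infty : (1 : WithTop ℕ∞) ≤ ((⊤:ℕ∞) : WithTop ℕ∞) := by
  rw [show ((1:WithTop ℕ∞)) = ((1:ℕ∞) : WithTop ℕ∞) from rfl]
  exact WithTop.coe_le_coe.mpr le_top
lemma wt_two_le_infty : (2 : WithTop ℕ∞) ≤ ((⊤:ℕ∞) : WithTop ℕ∞) := by
  rw [show ((2:WithTop ℕ∞)) = ((2:ℕ∞) : WithTop ℕ∞) from rfl]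
  exact WithTop.coe_le_coe.mpr le_top

set_option maxHeartbeats 2000000 in
lemma core (Ψ Q U : ℝ×ℝ → ℝ) (F3 : ℝ×ℝ×ℝ → ℝ) (r t : ℝ)
    (hΨ : ContDiff ℝ ((⊤:ℕ∞) : WithTop ℕ∞) Ψ) (hU : ContDiff ℝ 3 U) (hF : ContDiff ℝ 1 F3)
    (hQ : ∀ p : ℝ×ℝ, p.1 ∈ Set.Ioo (0:ℝ) 1 → ContDiffAt ℝ ((⊤:ℕ∞) : WithTop ℕ∞) Q p)
    (hQpos : ∀ p : ℝ×ℝ, p.1 ∈ Set.Ioo (0:ℝ) 1 → 0 < Q p)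
    (hΨpos : ∀ p : ℝ×ℝ, p.1 ∈ Set.Ioo (0:ℝ) 1 → 0 < Ψ p)
    (hr : r ∈ Set.Ioo (0:ℝ) 1)
    (hPDE : ∀ p : ℝ×ℝ, p.1 ∈ Set.Ioo (0:ℝ) 1 →
      D2 U p = 1/(Ψ p * Q p) * D1 (fun q => Ψ q / Q q * D1 U q) p + F3 (p.2, U p, D1 U p)) :
    D2 (fun p => D1 U p / Q p) (r,t)
      = 1/(Ψ (r,t) * Q (r,t))
          * D1 (fun p => Ψ p / Q p * D1 (fun q => D1 U q / Q q) p) (r,t)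
        + (D1 U (r,t) / Q (r,t))
            * ((1/Q (r,t)) * D1 (fun p => D1 Ψ p / (Q p * Ψ p)) (r,t)
               - D2 Q (r,t) / Q (r,t)
               + fderiv ℝ F3 (t, U (r,t), D1 U (r,t)) (0,0,1) * D1 Q (r,t) / Q (r,t))
        + fderiv ℝ F3 (t, U (r,t), D1 U (r,t)) (0,1,0) * (D1 U (r,t) / Q (r,t))
        + fderiv ℝ F3 (t, U (r,t), D1 U (r,t)) (0,0,1) * D1 (fun q => D1 U q / Q q) (r,t) := by
  -- global differentiability facts
  have hUd : Differentiable ℝ U := hU.differentiable (by norm_num)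
  have hU1 : ContDiff ℝ 2 (D1 U) := D1_contDiff hU (by norm_num)
  have hU2 : ContDiff ℝ 2 (D2 U) := D2_contDiff hU (by norm_num)
  have hU11 : ContDiff ℝ 1 (D1 (D1 U)) := D1_contDiff hU1 (by norm_num)
  have hU1d : Differentiable ℝ (D1 U) := hU1.differentiable (by norm_num)
  have hU2d : Differentiable ℝ (D2 U) := hU2.differentiable (by norm_num)
  have hU11d : Differentiable ℝ (D1 (D1 U)) := hU11.differentiable (by simp)
  have hΨd : Differentiable ℝ Ψ := hΨ.differentiable (by simp)
  have hΨ1 : ContDiff ℝ ((⊤:ℕ∞) : WithTop ℕ∞) (D1 Ψ) := D1_contDiff hΨ wt_infty1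
  have hΨ1d : Differentiable ℝ (D1 Ψ) := hΨ1.differentiable (by simp)
  -- pointwise differentiability on the strip
  have hQd : ∀ p : ℝ×ℝ, p.1 ∈ Set.Ioo (0:ℝ) 1 → DifferentiableAt ℝ Q p :=
    fun p hp => (hQ p hp).differentiableAt (by simp)
  have hQne : ∀ p : ℝ×ℝ, p.1 ∈ Set.Ioo (0:ℝ) 1 → Q p ≠ 0 :=
    fun p hp => ne_of_gt (hQpos p hp)
  have hΨne : ∀ p : ℝ×ℝ, p.1 ∈ Set.Ioo (0:ℝ) 1 → Ψ p ≠ 0 :=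
    fun p hp => ne_of_gt (hΨpos p hp)
  have hQ1d : ∀ p : ℝ×ℝ, p.1 ∈ Set.Ioo (0:ℝ) 1 → DifferentiableAt ℝ (D1 Q) p :=
    fun p hp => (D1_contDiffAt (hQ p hp) wt_infty1).differentiableAt (by simp)
  have hVc : ∀ p : ℝ×ℝ, p.1 ∈ Set.Ioo (0:ℝ) 1 →
      ContDiffAt ℝ 2 (fun q => D1 U q / Q q) p :=
    fun p hp => (hU1.contDiffAt).div ((hQ p hp).of_le wt_two_le_infty) (hQne p hp)
  have hVd : ∀ p : ℝ×ℝ, p.1 ∈ Set.Ioo (0:ℝ) 1 →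
      DifferentiableAt ℝ (fun q => D1 U q / Q q) p :=
    fun p hp => (hVc p hp).differentiableAt (by norm_num)
  have hV1d : ∀ p : ℝ×ℝ, p.1 ∈ Set.Ioo (0:ℝ) 1 →
      DifferentiableAt ℝ (D1 (fun q => D1 U q / Q q)) p :=
    fun p hp => (D1_contDiffAt (m := 1) (hVc p hp) (by norm_num)).differentiableAt (by simp)
  have hWuc : ∀ p : ℝ×ℝ, p.1 ∈ Set.Ioo (0:ℝ) 1 →
      ContDiffAt ℝ 2 (fun q => Ψ q / Q q * D1 U q) p :=
    fun p hp => (((hΨ.contDiffAt).of_le wt_two_le_infty).div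
      ((hQ p hp).of_le wt_two_le_infty) (hQne p hp)).mul (hU1.contDiffAt)
  have hWud : ∀ p : ℝ×ℝ, p.1 ∈ Set.Ioo (0:ℝ) 1 →
      DifferentiableAt ℝ (fun q => Ψ q / Q q * D1 U q) p :=
    fun p hp => (hWuc p hp).differentiableAt (by norm_num)
  have hWu1d : ∀ p : ℝ×ℝ, p.1 ∈ Set.Ioo (0:ℝ) 1 →
      DifferentiableAt ℝ (D1 (fun q => Ψ q / Q q * D1 U q)) p :=
    fun p hp => (D1_contDiffAt (m := 1) (hWuc p hp) (by norm_num)).differentiableAt (by simp)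
  have hrt : ((r,t) : ℝ×ℝ).1 ∈ Set.Ioo (0:ℝ) 1 := hr
  -- quotient-rule formulas valid on the strip
  have F1 : ∀ p : ℝ×ℝ, p.1 ∈ Set.Ioo (0:ℝ) 1 →
      D1 (fun q => D1 U q / Q q) p
        = (D1 (D1 U) p * Q p - D1 U p * D1 Q p) / Q p ^ 2 :=
    fun p hp => (hasDerivAt_D1 (hVd p hp)).unique
      ((hasDerivAt_D1 (hU1d p)).div (hasDerivAt_D1 (hQd p hp)) (hQne p hp))
  have F2 : ∀ p : ℝ×ℝ, p.1 ∈ Set.Ioo (0:ℝ) 1 →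
      D1 (fun q => Ψ q / Q q * D1 U q) p
        = ((D1 Ψ p * Q p - Ψ p * D1 Q p) / Q p ^ 2) * D1 U p
          + (Ψ p / Q p) * D1 (D1 U) p :=
    fun p hp => (hasDerivAt_D1 (hWud p hp)).unique
      (((hasDerivAt_D1 (hΨd p)).div (hasDerivAt_D1 (hQd p hp)) (hQne p hp)).mul
        (hasDerivAt_D1 (hU1d p)))

  have hq0 : Q (r,t) ≠ 0 := hQne (r,t) hrt
  have hψ0 : Ψ (r,t) ≠ 0 := hΨne (r,t) hrt
  -- third-order expansion of D1 (D1 V)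
  have hdv11 : D1 (D1 (fun q => D1 U q / Q q)) (r,t)
      = ((D1 (D1 (D1 U)) (r,t) * Q (r,t) - D1 U (r,t) * D1 (D1 Q) (r,t)) * Q (r,t)
          - 2 * (D1 (D1 U) (r,t) * Q (r,t) - D1 U (r,t) * D1 Q (r,t)) * D1 Q (r,t))
        / Q (r,t) ^ 3 := by
    have h3 : deriv (fun s => D1 (fun q => D1 U q / Q q) (s,t)) r
        = D1 (D1 (fun q => D1 U q / Q q)) (r,t) := (hasDerivAt_D1 (hV1d (r,t) hrt)).deriv
    have hev : (fun s => D1 (fun q => D1 U q / Q q) (s,t))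
        =ᶠ[nhds r] (fun s => (D1 (D1 U) (s,t) * Q (s,t) - D1 U (s,t) * D1 Q (s,t)) / Q (s,t) ^ 2) := by
      filter_upwards [Ioo_mem_nhds hr.1 hr.2] with s hs
      exact F1 (s,t) hs
    have h2 := (((hasDerivAt_D1 (hU11d (r,t))).mul (hasDerivAt_D1 (hQd (r,t) hrt))).sub
        ((hasDerivAt_D1 (hU1d (r,t))).mul (hasDerivAt_D1 (hQ1d (r,t) hrt)))).div
        ((hasDerivAt_D1 (hQd (r,t) hrt)).pow 2) (pow_ne_zero 2 hq0)
    rw [← h3, hev.deriv_eq]; erw [h2.deriv]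
    simp only [Pi.mul_apply, Pi.sub_apply, Pi.div_apply, Pi.pow_apply, Pi.add_apply]
    field_simp
    ring
  -- third-order expansion of D1 (D1 Wu)
  have hw11 : D1 (D1 (fun q => Ψ q / Q q * D1 U q)) (r,t)
      = (((D1 (D1 Ψ) (r,t) * Q (r,t) - Ψ (r,t) * D1 (D1 Q) (r,t)) * Q (r,t)
            - 2 * (D1 Ψ (r,t) * Q (r,t) - Ψ (r,t) * D1 Q (r,t)) * D1 Q (r,t)) / Q (r,t) ^ 3)
          * D1 U (r,t)
        + 2 * ((D1 Ψ (r,t) * Q (r,t) - Ψ (r,t) * D1 Q (r,t)) / Q (r,t) ^ 2) * D1 (D1 U) (r,t)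
        + (Ψ (r,t) / Q (r,t)) * D1 (D1 (D1 U)) (r,t) := by
    have h3 : deriv (fun s => D1 (fun q => Ψ q / Q q * D1 U q) (s,t)) r
        = D1 (D1 (fun q => Ψ q / Q q * D1 U q)) (r,t) :=
      (hasDerivAt_D1 (hWu1d (r,t) hrt)).deriv
    have hev : (fun s => D1 (fun q => Ψ q / Q q * D1 U q) (s,t))
        =ᶠ[nhds r] (fun s => ((D1 Ψ (s,t) * Q (s,t) - Ψ (s,t) * D1 Q (s,t)) / Q (s,t) ^ 2)
            * D1 U (s,t) + (Ψ (s,t) / Q (s,t)) * D1 (D1 U) (s,t)) := by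
      filter_upwards [Ioo_mem_nhds hr.1 hr.2] with s hs
      exact F2 (s,t) hs
    have h2 := (((((hasDerivAt_D1 (hΨ1d (r,t))).mul (hasDerivAt_D1 (hQd (r,t) hrt))).sub
        ((hasDerivAt_D1 (hΨd (r,t))).mul (hasDerivAt_D1 (hQ1d (r,t) hrt)))).div
        ((hasDerivAt_D1 (hQd (r,t) hrt)).pow 2) (pow_ne_zero 2 hq0)).mul
        (hasDerivAt_D1 (hU1d (r,t)))).add
        (((hasDerivAt_D1 (hΨd (r,t))).div (hasDerivAt_D1 (hQd (r,t) hrt)) hq0).mul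
          (hasDerivAt_D1 (hU11d (r,t))))
    rw [← h3, hev.deriv_eq]; erw [h2.deriv]
    simp only [Pi.mul_apply, Pi.sub_apply, Pi.div_apply, Pi.pow_apply, Pi.add_apply]
    field_simp
    ring
  -- differentiate the PDE in the radial direction
  have hu21 : D1 (D2 U) (r,t)
      = -((D1 Ψ (r,t) * Q (r,t) + Ψ (r,t) * D1 Q (r,t)) / (Ψ (r,t) * Q (r,t)) ^ 2)
            * D1 (fun q => Ψ q / Q q * D1 U q) (r,t)
        + (1 / (Ψ (r,t) * Q (r,t))) * D1 (D1 (fun q => Ψ q / Q q * D1 U q)) (r,t)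
        + (D1 U (r,t) * fderiv ℝ F3 (t, U (r,t), D1 U (r,t)) (0,1,0)
            + D1 (D1 U) (r,t) * fderiv ℝ F3 (t, U (r,t), D1 U (r,t)) (0,0,1)) := by
    have h3 : deriv (fun s => D2 U (s,t)) r = D1 (D2 U) (r,t) :=
      (hasDerivAt_D1 (hU2d (r,t))).deriv
    have hev : (fun s => D2 U (s,t))
        =ᶠ[nhds r] (fun s => 1 / (Ψ (s,t) * Q (s,t))
            * D1 (fun q => Ψ q / Q q * D1 U q) (s,t) + F3 (t, U (s,t), D1 U (s,t))) := by
      filter_upwards [Ioo_mem_nhds hr.1 hr.2] with s hs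
      exact hPDE (s,t) hs
    have h2 := (((hasDerivAt_const r (1:ℝ)).div
        ((hasDerivAt_D1 (hΨd (r,t))).mul (hasDerivAt_D1 (hQd (r,t) hrt)))
        (mul_ne_zero hψ0 hq0)).mul (hasDerivAt_D1 (hWu1d (r,t) hrt))).add
        (f_chain (t := t) hF (hasDerivAt_D1 (hUd (r,t))) (hasDerivAt_D1 (hU1d (r,t))))
    rw [← h3, hev.deriv_eq]; erw [h2.deriv]
    simp only [Pi.mul_apply, Pi.sub_apply, Pi.div_apply, Pi.pow_apply, Pi.add_apply]
    field_simp
    ring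
  -- remaining first-order identities at the point
  have hLHS : D2 (fun p => D1 U p / Q p) (r,t)
      = (D2 (D1 U) (r,t) * Q (r,t) - D1 U (r,t) * D2 Q (r,t)) / Q (r,t) ^ 2 :=
    (hasDerivAt_D2 (hVd (r,t) hrt)).unique
      ((hasDerivAt_D2 (hU1d (r,t))).div (hasDerivAt_D2 (hQd (r,t) hrt)) hq0)
  have hWvd : DifferentiableAt ℝ (fun p => Ψ p / Q p * D1 (fun q => D1 U q / Q q) p) (r,t) :=
    ContDiffAt.differentiableAt
      ((((hΨ.contDiffAt).of_le wt_one_le_infty).div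
          (((hQ (r,t) hrt)).of_le wt_one_le_infty) hq0).mul
        (D1_contDiffAt (hVc (r,t) hrt) (by norm_num))) (by simp)
  have hT1 : D1 (fun p => Ψ p / Q p * D1 (fun q => D1 U q / Q q) p) (r,t)
      = ((D1 Ψ (r,t) * Q (r,t) - Ψ (r,t) * D1 Q (r,t)) / Q (r,t) ^ 2)
          * D1 (fun q => D1 U q / Q q) (r,t)
        + (Ψ (r,t) / Q (r,t)) * D1 (D1 (fun q => D1 U q / Q q)) (r,t) :=
    (hasDerivAt_D1 hWvd).unique
      (((hasDerivAt_D1 (hΨd (r,t))).div (hasDerivAt_D1 (hQd (r,t) hrt)) hq0).mul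
        (hasDerivAt_D1 (hV1d (r,t) hrt)))
  have hT2d : DifferentiableAt ℝ (fun p => D1 Ψ p / (Q p * Ψ p)) (r,t) :=
    ContDiffAt.differentiableAt
      (((hΨ1.contDiffAt).of_le wt_one_le_infty).div
        ((((hQ (r,t) hrt)).of_le wt_one_le_infty).mul
          ((hΨ.contDiffAt).of_le wt_one_le_infty)) (mul_ne_zero hq0 hψ0)) (by simp)
  have hT2 : D1 (fun p => D1 Ψ p / (Q p * Ψ p)) (r,t)
      = (D1 (D1 Ψ) (r,t) * (Q (r,t) * Ψ (r,t))
          - D1 Ψ (r,t) * (D1 Q (r,t) * Ψ (r,t) + Q (r,t) * D1 Ψ (r,t)))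
        / (Q (r,t) * Ψ (r,t)) ^ 2 :=
    (hasDerivAt_D1 hT2d).unique
      ((hasDerivAt_D1 (hΨ1d (r,t))).div
        ((hasDerivAt_D1 (hQd (r,t) hrt)).mul (hasDerivAt_D1 (hΨd (r,t))))
        (mul_ne_zero hq0 hψ0))
  have hsym : D1 (D2 U) (r,t) = D2 (D1 U) (r,t) := D1D2_symm hU _
  rw [hLHS, ← hsym, hu21, hw11, F2 _ hrt, hT1, hdv11, F1 _ hrt, hT2]
  field_simp
  ring

set_option maxHeartbeats 2000000 in
/-- if `u(r,t)` solves `u_t = (1/(ψq)) ∂_r((ψ/q)u_r) + f(t,u,u_r)` on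
`(0,1) × ℝ`, then `v := u_r/q` satisfies
`v_t = (1/(ψq)) ∂_r((ψ/q)v_r) + v[(1/q)∂_r(ψ_r/(qψ)) − q_t/q + f_p q_r/q] + f_ξ v + f_p v_r`. -/
theorem stmt_3 (ψ χ : ℝ → ℝ → ℝ)
    (hψ : ContDiff ℝ (⊤ : ℕ∞) fun p : ℝ × ℝ => ψ p.1 p.2)
    (hχ : ContDiff ℝ (⊤ : ℕ∞) fun p : ℝ × ℝ => χ p.1 p.2)
    (hψpos : ∀ r ∈ Set.Icc (0:ℝ) 1, ∀ t : ℝ, 0 < ψ r t)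
    (hqpos : ∀ r ∈ Set.Icc (0:ℝ) 1, ∀ t : ℝ, 0 < qfun ψ χ r t)
    (f : ℝ → ℝ → ℝ → ℝ)
    (hf : ContDiff ℝ 1 fun p : ℝ × ℝ × ℝ => f p.1 p.2.1 p.2.2)
    (u : ℝ → ℝ → ℝ)
    (hu : ContDiff ℝ 3 fun p : ℝ × ℝ => u p.1 p.2)
    (hPDE : ∀ r ∈ Set.Ioo (0:ℝ) 1, ∀ t : ℝ,
      pdt u r t
        = (1 / (ψ r t * qfun ψ χ r t))
            * pdr (fun s τ => (ψ s τ / qfun ψ χ s τ) * pdr u s τ) r t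
          + f t (u r t) (pdr u r t)) :
    ∀ r ∈ Set.Ioo (0:ℝ) 1, ∀ t : ℝ,
      pdt (fun s τ => pdr u s τ / qfun ψ χ s τ) r t
        = (1 / (ψ r t * qfun ψ χ r t))
            * pdr (fun s τ => (ψ s τ / qfun ψ χ s τ)
                * pdr (fun a b => pdr u a b / qfun ψ χ a b) s τ) r t
          + (pdr u r t / qfun ψ χ r t)
              * ((1 / qfun ψ χ r t)
                    * pdr (fun s τ => pdr ψ s τ / (qfun ψ χ s τ * ψ s τ)) r t
                  - pdt (qfun ψ χ) r t / qfun ψ χ r t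
                  + deriv (fun p => f t (u r t) p) (pdr u r t)
                      * pdr (qfun ψ χ) r t / qfun ψ χ r t)
          + deriv (fun ξ => f t ξ (pdr u r t)) (u r t) * (pdr u r t / qfun ψ χ r t)
          + deriv (fun p => f t (u r t) p) (pdr u r t)
              * pdr (fun a b => pdr u a b / qfun ψ χ a b) r t := by
  intro r hr t
  have hψ' : ContDiff ℝ ((⊤:ℕ∞) : WithTop ℕ∞) (fun p : ℝ×ℝ => ψ p.1 p.2) := hψ.of_le (by simp)
  have hχ' : ContDiff ℝ ((⊤:ℕ∞) : WithTop ℕ∞) (fun p : ℝ×ℝ => χ p.1 p.2) := hχ.of_le (by simp)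
  have hΨd : Differentiable ℝ (fun p : ℝ×ℝ => ψ p.1 p.2) := hψ'.differentiable (by simp)
  have hXd : Differentiable ℝ (fun p : ℝ×ℝ => χ p.1 p.2) := hχ'.differentiable (by simp)
  have hUd : Differentiable ℝ (fun p : ℝ×ℝ => u p.1 p.2) := hu.differentiable (by norm_num)
  have hU1 : ContDiff ℝ 2 (D1 (fun p : ℝ×ℝ => u p.1 p.2)) := D1_contDiff hu (by norm_num)
  have hU1d : Differentiable ℝ (D1 (fun p : ℝ×ℝ => u p.1 p.2)) := hU1.differentiable (by norm_num)
  have hA : ContDiff ℝ ((⊤:ℕ∞) : WithTop ℕ∞) (D1 (fun p : ℝ×ℝ => ψ p.1 p.2)) := D1_contDiff hψ' wt_infty1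
  have hB : ContDiff ℝ ((⊤:ℕ∞) : WithTop ℕ∞) (D1 (fun p : ℝ×ℝ => χ p.1 p.2)) := D1_contDiff hχ' wt_infty1
  have hS : ContDiff ℝ ((⊤:ℕ∞) : WithTop ℕ∞)
      (fun p : ℝ×ℝ => D1 (fun p : ℝ×ℝ => ψ p.1 p.2) p ^ 2 + D1 (fun p : ℝ×ℝ => χ p.1 p.2) p ^ 2) := (hA.pow 2).add (hB.pow 2)
  have hpdψ : ∀ a b : ℝ, pdr ψ a b = D1 (fun p : ℝ×ℝ => ψ p.1 p.2) (a,b) :=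
    fun a b => pdr_eq' (hΨd (a,b))
  have hpdχ : ∀ a b : ℝ, pdr χ a b = D1 (fun p : ℝ×ℝ => χ p.1 p.2) (a,b) :=
    fun a b => pdr_eq' (hXd (a,b))
  have hpdu : ∀ a b : ℝ, pdr u a b = D1 (fun p : ℝ×ℝ => u p.1 p.2) (a,b) :=
    fun a b => pdr_eq' (hUd (a,b))
  have hqQ : ∀ a b : ℝ, qfun ψ χ a b = (fun p : ℝ×ℝ => Real.sqrt (D1 (fun p : ℝ×ℝ => ψ p.1 p.2) p ^ 2 + D1 (fun p : ℝ×ℝ => χ p.1 p.2) p ^ 2)) (a,b) := by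
    intro a b
    simp only [qfun, hpdψ, hpdχ]
  have hQpos : ∀ p : ℝ×ℝ, p.1 ∈ Set.Ioo (0:ℝ) 1 → 0 < (fun p : ℝ×ℝ => Real.sqrt (D1 (fun p : ℝ×ℝ => ψ p.1 p.2) p ^ 2 + D1 (fun p : ℝ×ℝ => χ p.1 p.2) p ^ 2)) p := by
    intro p hp
    have h0 := hqpos p.1 (Set.Ioo_subset_Icc_self hp) p.2
    rw [hqQ p.1 p.2] at h0
    exact h0
  have hΨpos : ∀ p : ℝ×ℝ, p.1 ∈ Set.Ioo (0:ℝ) 1 → 0 < (fun p : ℝ×ℝ => ψ p.1 p.2) p :=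
    fun p hp => hψpos p.1 (Set.Ioo_subset_Icc_self hp) p.2
  have hQsm : ∀ p : ℝ×ℝ, p.1 ∈ Set.Ioo (0:ℝ) 1 → ContDiffAt ℝ ((⊤:ℕ∞) : WithTop ℕ∞) (fun p : ℝ×ℝ => Real.sqrt (D1 (fun p : ℝ×ℝ => ψ p.1 p.2) p ^ 2 + D1 (fun p : ℝ×ℝ => χ p.1 p.2) p ^ 2)) p := by
    intro p hp
    have hSpos : 0 < D1 (fun p : ℝ×ℝ => ψ p.1 p.2) p ^ 2 + D1 (fun p : ℝ×ℝ => χ p.1 p.2) p ^ 2 :=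
      Real.sqrt_pos.mp (hQpos p hp)
    exact (hS.contDiffAt).sqrt (ne_of_gt hSpos)
  have hQd : ∀ p : ℝ×ℝ, p.1 ∈ Set.Ioo (0:ℝ) 1 → DifferentiableAt ℝ (fun p : ℝ×ℝ => Real.sqrt (D1 (fun p : ℝ×ℝ => ψ p.1 p.2) p ^ 2 + D1 (fun p : ℝ×ℝ => χ p.1 p.2) p ^ 2)) p :=
    fun p hp => (hQsm p hp).differentiableAt (by simp)
  have hQne : ∀ p : ℝ×ℝ, p.1 ∈ Set.Ioo (0:ℝ) 1 → (fun p : ℝ×ℝ => Real.sqrt (D1 (fun p : ℝ×ℝ => ψ p.1 p.2) p ^ 2 + D1 (fun p : ℝ×ℝ => χ p.1 p.2) p ^ 2)) p ≠ 0 :=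
    fun p hp => ne_of_gt (hQpos p hp)
  have hVdAt : ∀ p : ℝ×ℝ, p.1 ∈ Set.Ioo (0:ℝ) 1 →
      DifferentiableAt ℝ (fun q => D1 (fun p : ℝ×ℝ => u p.1 p.2) q / (fun p : ℝ×ℝ => Real.sqrt (D1 (fun p : ℝ×ℝ => ψ p.1 p.2) p ^ 2 + D1 (fun p : ℝ×ℝ => χ p.1 p.2) p ^ 2)) q) p :=
    fun p hp => ContDiffAt.differentiableAt
      ((hU1.contDiffAt.of_le (by norm_num)).div
        ((hQsm p hp).of_le wt_one_le_infty) (hQne p hp)) (by simp)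
  have hWuAt : ∀ p : ℝ×ℝ, p.1 ∈ Set.Ioo (0:ℝ) 1 →
      DifferentiableAt ℝ (fun q => (fun p : ℝ×ℝ => ψ p.1 p.2) q / (fun p : ℝ×ℝ => Real.sqrt (D1 (fun p : ℝ×ℝ => ψ p.1 p.2) p ^ 2 + D1 (fun p : ℝ×ℝ => χ p.1 p.2) p ^ 2)) q * D1 (fun p : ℝ×ℝ => u p.1 p.2) q) p :=
    fun p hp => ContDiffAt.differentiableAt
      (((hψ'.contDiffAt.of_le wt_one_le_infty).div
        ((hQsm p hp).of_le wt_one_le_infty) (hQne p hp)).mul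
        (hU1.contDiffAt.of_le (by norm_num))) (by simp)
  have hVfn : (fun a b : ℝ => pdr u a b / qfun ψ χ a b)
      = fun a b => D1 (fun p : ℝ×ℝ => u p.1 p.2) (a,b) / (fun p : ℝ×ℝ => Real.sqrt (D1 (fun p : ℝ×ℝ => ψ p.1 p.2) p ^ 2 + D1 (fun p : ℝ×ℝ => χ p.1 p.2) p ^ 2)) (a,b) := by
    funext a b; rw [hpdu, hqQ]
  have hPDE' : ∀ p : ℝ×ℝ, p.1 ∈ Set.Ioo (0:ℝ) 1 →
      D2 (fun p : ℝ×ℝ => u p.1 p.2) p = 1 / ((fun p : ℝ×ℝ => ψ p.1 p.2) p * (fun p : ℝ×ℝ => Real.sqrt (D1 (fun p : ℝ×ℝ => ψ p.1 p.2) p ^ 2 + D1 (fun p : ℝ×ℝ => χ p.1 p.2) p ^ 2)) p)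
          * D1 (fun q => (fun p : ℝ×ℝ => ψ p.1 p.2) q / (fun p : ℝ×ℝ => Real.sqrt (D1 (fun p : ℝ×ℝ => ψ p.1 p.2) p ^ 2 + D1 (fun p : ℝ×ℝ => χ p.1 p.2) p ^ 2)) q * D1 (fun p : ℝ×ℝ => u p.1 p.2) q) p
        + (fun p : ℝ×ℝ×ℝ => f p.1 p.2.1 p.2.2) (p.2, (fun p : ℝ×ℝ => u p.1 p.2) p, D1 (fun p : ℝ×ℝ => u p.1 p.2) p) := by
    rintro ⟨a,b⟩ hp
    have h0 := hPDE a hp b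
    have hl : pdt u a b = D2 (fun p : ℝ×ℝ => u p.1 p.2) (a,b) := pdt_eq' (hUd (a,b))
    have hfn : (fun s τ : ℝ => ψ s τ / qfun ψ χ s τ * pdr u s τ)
        = fun s τ => (fun p : ℝ×ℝ => ψ p.1 p.2) (s,τ) / (fun p : ℝ×ℝ => Real.sqrt (D1 (fun p : ℝ×ℝ => ψ p.1 p.2) p ^ 2 + D1 (fun p : ℝ×ℝ => χ p.1 p.2) p ^ 2)) (s,τ) * D1 (fun p : ℝ×ℝ => u p.1 p.2) (s,τ) := by
      funext s τ; rw [hqQ, hpdu]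
    have hinner : pdr (fun s τ => ψ s τ / qfun ψ χ s τ * pdr u s τ) a b
        = D1 (fun q => (fun p : ℝ×ℝ => ψ p.1 p.2) q / (fun p : ℝ×ℝ => Real.sqrt (D1 (fun p : ℝ×ℝ => ψ p.1 p.2) p ^ 2 + D1 (fun p : ℝ×ℝ => χ p.1 p.2) p ^ 2)) q * D1 (fun p : ℝ×ℝ => u p.1 p.2) q) (a,b) := by
      rw [hfn]; exact pdr_eq' (hWuAt (a,b) hp)
    rw [hl, hinner, hqQ a b, hpdu a b] at h0
    exact h0
  have hrt : ((r,t) : ℝ×ℝ).1 ∈ Set.Ioo (0:ℝ) 1 := hr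
  -- rewrite each piece of the goal
  have hL : pdt (fun s τ => pdr u s τ / qfun ψ χ s τ) r t
      = D2 (fun q => D1 (fun p : ℝ×ℝ => u p.1 p.2) q / (fun p : ℝ×ℝ => Real.sqrt (D1 (fun p : ℝ×ℝ => ψ p.1 p.2) p ^ 2 + D1 (fun p : ℝ×ℝ => χ p.1 p.2) p ^ 2)) q) (r,t) := by
    rw [hVfn]; exact pdt_eq' (hVdAt (r,t) hrt)
  have hlast : pdr (fun a b => pdr u a b / qfun ψ χ a b) r t
      = D1 (fun q => D1 (fun p : ℝ×ℝ => u p.1 p.2) q / (fun p : ℝ×ℝ => Real.sqrt (D1 (fun p : ℝ×ℝ => ψ p.1 p.2) p ^ 2 + D1 (fun p : ℝ×ℝ => χ p.1 p.2) p ^ 2)) q) (r,t) := by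
    rw [hVfn]; exact pdr_eq' (hVdAt (r,t) hrt)
  have hWvd : DifferentiableAt ℝ
      (fun p => (fun p : ℝ×ℝ => ψ p.1 p.2) p / (fun p : ℝ×ℝ => Real.sqrt (D1 (fun p : ℝ×ℝ => ψ p.1 p.2) p ^ 2 + D1 (fun p : ℝ×ℝ => χ p.1 p.2) p ^ 2)) p * D1 (fun q => D1 (fun p : ℝ×ℝ => u p.1 p.2) q / (fun p : ℝ×ℝ => Real.sqrt (D1 (fun p : ℝ×ℝ => ψ p.1 p.2) p ^ 2 + D1 (fun p : ℝ×ℝ => χ p.1 p.2) p ^ 2)) q) p) (r,t) :=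
    ContDiffAt.differentiableAt
      (((hψ'.contDiffAt.of_le wt_one_le_infty).div
        ((hQsm (r,t) hrt).of_le wt_one_le_infty) (hQne (r,t) hrt)).mul
        (D1_contDiffAt ((hU1.contDiffAt.of_le (le_refl 2)).div
          ((hQsm (r,t) hrt).of_le wt_two_le_infty) (hQne (r,t) hrt)) (by norm_num))) (by simp)
  have hterm1 : pdr (fun s τ => (ψ s τ / qfun ψ χ s τ)
        * pdr (fun a b => pdr u a b / qfun ψ χ a b) s τ) r t
      = D1 (fun p => (fun p : ℝ×ℝ => ψ p.1 p.2) p / (fun p : ℝ×ℝ => Real.sqrt (D1 (fun p : ℝ×ℝ => ψ p.1 p.2) p ^ 2 + D1 (fun p : ℝ×ℝ => χ p.1 p.2) p ^ 2)) p * D1 (fun q => D1 (fun p : ℝ×ℝ => u p.1 p.2) q / (fun p : ℝ×ℝ => Real.sqrt (D1 (fun p : ℝ×ℝ => ψ p.1 p.2) p ^ 2 + D1 (fun p : ℝ×ℝ => χ p.1 p.2) p ^ 2)) q) p) (r,t) := by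
    show deriv (fun s => (ψ s t / qfun ψ χ s t)
        * pdr (fun a b => pdr u a b / qfun ψ χ a b) s t) r = _
    have hev : (fun s => (ψ s t / qfun ψ χ s t)
          * pdr (fun a b => pdr u a b / qfun ψ χ a b) s t)
        =ᶠ[nhds r] (fun s => (fun p : ℝ×ℝ => ψ p.1 p.2) (s,t) / (fun p : ℝ×ℝ => Real.sqrt (D1 (fun p : ℝ×ℝ => ψ p.1 p.2) p ^ 2 + D1 (fun p : ℝ×ℝ => χ p.1 p.2) p ^ 2)) (s,t)
          * D1 (fun q => D1 (fun p : ℝ×ℝ => u p.1 p.2) q / (fun p : ℝ×ℝ => Real.sqrt (D1 (fun p : ℝ×ℝ => ψ p.1 p.2) p ^ 2 + D1 (fun p : ℝ×ℝ => χ p.1 p.2) p ^ 2)) q) (s,t)) := by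
      filter_upwards [Ioo_mem_nhds hr.1 hr.2] with s hs
      have hin : pdr (fun a b => pdr u a b / qfun ψ χ a b) s t
          = D1 (fun q => D1 (fun p : ℝ×ℝ => u p.1 p.2) q / (fun p : ℝ×ℝ => Real.sqrt (D1 (fun p : ℝ×ℝ => ψ p.1 p.2) p ^ 2 + D1 (fun p : ℝ×ℝ => χ p.1 p.2) p ^ 2)) q) (s,t) := by
        rw [hVfn]; exact pdr_eq' (hVdAt (s,t) hs)
      rw [hin, hqQ]
    rw [hev.deriv_eq]
    exact (hasDerivAt_D1 hWvd).deriv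
  have hT2d : DifferentiableAt ℝ (fun p => D1 (fun p : ℝ×ℝ => ψ p.1 p.2) p / ((fun p : ℝ×ℝ => Real.sqrt (D1 (fun p : ℝ×ℝ => ψ p.1 p.2) p ^ 2 + D1 (fun p : ℝ×ℝ => χ p.1 p.2) p ^ 2)) p * (fun p : ℝ×ℝ => ψ p.1 p.2) p)) (r,t) :=
    ContDiffAt.differentiableAt
      ((hA.contDiffAt.of_le wt_one_le_infty).div
        (((hQsm (r,t) hrt).of_le wt_one_le_infty).mul
          (hψ'.contDiffAt.of_le wt_one_le_infty))
        (mul_ne_zero (hQne (r,t) hrt) (ne_of_gt (hΨpos (r,t) hrt)))) (by simp)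
  have hterm2 : pdr (fun s τ => pdr ψ s τ / (qfun ψ χ s τ * ψ s τ)) r t
      = D1 (fun p => D1 (fun p : ℝ×ℝ => ψ p.1 p.2) p / ((fun p : ℝ×ℝ => Real.sqrt (D1 (fun p : ℝ×ℝ => ψ p.1 p.2) p ^ 2 + D1 (fun p : ℝ×ℝ => χ p.1 p.2) p ^ 2)) p * (fun p : ℝ×ℝ => ψ p.1 p.2) p)) (r,t) := by
    have hfn2 : (fun s τ : ℝ => pdr ψ s τ / (qfun ψ χ s τ * ψ s τ))
        = fun s τ => D1 (fun p : ℝ×ℝ => ψ p.1 p.2) (s,τ) / ((fun p : ℝ×ℝ => Real.sqrt (D1 (fun p : ℝ×ℝ => ψ p.1 p.2) p ^ 2 + D1 (fun p : ℝ×ℝ => χ p.1 p.2) p ^ 2)) (s,τ) * (fun p : ℝ×ℝ => ψ p.1 p.2) (s,τ)) := by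
      funext s τ; rw [hpdψ, hqQ]
    rw [hfn2]; exact pdr_eq' hT2d
  have hqfn : qfun ψ χ = fun a b => (fun p : ℝ×ℝ => Real.sqrt (D1 (fun p : ℝ×ℝ => ψ p.1 p.2) p ^ 2 + D1 (fun p : ℝ×ℝ => χ p.1 p.2) p ^ 2)) (a,b) :=
    funext fun a => funext fun b => hqQ a b
  have hqt : pdt (qfun ψ χ) r t = D2 (fun p : ℝ×ℝ => Real.sqrt (D1 (fun p : ℝ×ℝ => ψ p.1 p.2) p ^ 2 + D1 (fun p : ℝ×ℝ => χ p.1 p.2) p ^ 2)) (r,t) := by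
    rw [hqfn]; exact pdt_eq' (hQd (r,t) hrt)
  have hqr : pdr (qfun ψ χ) r t = D1 (fun p : ℝ×ℝ => Real.sqrt (D1 (fun p : ℝ×ℝ => ψ p.1 p.2) p ^ 2 + D1 (fun p : ℝ×ℝ => χ p.1 p.2) p ^ 2)) (r,t) := by
    rw [hqfn]; exact pdr_eq' (hQd (r,t) hrt)
  have hfp : deriv (fun p => f t (u r t) p) (pdr u r t)
      = fderiv ℝ (fun p : ℝ×ℝ×ℝ => f p.1 p.2.1 p.2.2) (t, (fun p : ℝ×ℝ => u p.1 p.2) (r,t), D1 (fun p : ℝ×ℝ => u p.1 p.2) (r,t)) (0,0,1) := by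
    rw [hpdu]; exact f_partial3 hf t (u r t) (D1 (fun p : ℝ×ℝ => u p.1 p.2) (r,t))
  have hfξ : deriv (fun ξ => f t ξ (pdr u r t)) (u r t)
      = fderiv ℝ (fun p : ℝ×ℝ×ℝ => f p.1 p.2.1 p.2.2) (t, (fun p : ℝ×ℝ => u p.1 p.2) (r,t), D1 (fun p : ℝ×ℝ => u p.1 p.2) (r,t)) (0,1,0) := by
    rw [hpdu]; exact f_partial2 hf t (u r t) (D1 (fun p : ℝ×ℝ => u p.1 p.2) (r,t))
  rw [hL, hterm1, hterm2, hqt, hqr, hfξ, hfp, hlast, hpdu r t, hqQ r t]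
  exact core (fun p : ℝ×ℝ => ψ p.1 p.2) (fun p : ℝ×ℝ => Real.sqrt (D1 (fun p : ℝ×ℝ => ψ p.1 p.2) p ^ 2 + D1 (fun p : ℝ×ℝ => χ p.1 p.2) p ^ 2)) (fun p : ℝ×ℝ => u p.1 p.2) (fun p : ℝ×ℝ×ℝ => f p.1 p.2.1 p.2.2) r t hψ' hu hf hQsm hQpos hΨpos hr hPDE'
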